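/- Let R = K[a, v2, v1]. If (r1, r2, r3) ∈ R^3 satisfies a^{r+1} r1 + v2 r2 = 0, v2^{t-2} A r1 - v1 r2 + (a^{r+1} v1 + v2^{t-1} A) r3 = 0, and -r1 - v2 r3 = 0, then r1 = -v2 r3 and r2 = a^{r+1} r3, so (r1, r2, r3) = r3 · (-v2, a^{r+1}, 1) = -r3 · (v2, -a^{r+1}, -1). -/
import Mathlib


noncomputable section

open MvPolynomial

/-- `R = K[a, v₂, v₁]`, with `a = X 0`, `v₂ = X 1`, `v₁ = X 2`. -/
abbrev R3 (K : Type*) [Field K] := MvPolynomial (Fin 3) K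

variable (K : Type*) [Field K]

/-- The inclusion of `K[a, v₂]` into `R = K[a, v₂, v₁]`. -/
def emb (A0 : MvPolynomial (Fin 2) K) : R3 K := aeval ![X 0, X 1] A0

/-- If `(r₁, r₂, r₃)` is in the kernel of the middle matrix, then `r₁ = -v₂ r₃` and
`r₂ = a^{r+1} r₃`, so `(r₁, r₂, r₃) = r₃ • (-v₂, a^{r+1}, 1)`. -/
theorem stmt10 (r t : ℕ) (ht : 2 ≤ t) (A0 : MvPolynomial (Fin 2) K)
    (r1 r2 r3 : R3 K)
    (h1 : X 0 ^ (r + 1) * r1 + X 1 * r2 = 0)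
    (h2 : X 1 ^ (t - 2) * emb K A0 * r1 - X 2 * r2 +
      (X 0 ^ (r + 1) * X 2 + X 1 ^ (t - 1) * emb K A0) * r3 = 0)
    (h3 : -r1 - X 1 * r3 = 0) :
    r1 = -(X 1) * r3 ∧ r2 = X 0 ^ (r + 1) * r3 ∧
    ![r1, r2, r3] = r3 • ![-(X 1), X 0 ^ (r + 1), (1 : R3 K)] := by
  have hr1 : r1 = -(X 1) * r3 := by linear_combination -h3
  have hX1 : (X 1 : R3 K) ≠ 0 := X_ne_zero 1
  have hr2 : r2 = X 0 ^ (r + 1) * r3 := by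
    have : X 1 * (r2 - X 0 ^ (r + 1) * r3) = 0 := by
      rw [hr1] at h1; ring_nf; ring_nf at h1; linear_combination h1
    rcases mul_eq_zero.mp this with h | h
    · exact absurd h hX1
    · linear_combination h
  refine ⟨hr1, hr2, ?_⟩
  funext i
  fin_cases i <;> simp [hr1, hr2] <;> ring
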